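/- Let A be a substochastic matrix. Then the index of contraction of A equals the infimum of all n ∈ ℕ₀ such that ‖A^{n+1}‖_∞ < 1. In particular, the index of contraction of A is finite if and only if the spectral radius ρ(A) < 1. -/

import Mathlib

/-! Mass in row `i` of `A^(m+1)` is lost only at rows of `Ĵ[A]` and is otherwise passed along
edges of the graph of `A`, so that row sums to less than one exactly when a walk of length at
most `m` leads from `i` into `Ĵ[A]`. Hence `‖A^(m+1)‖_∞ < 1` iff `ĉon A ≤ m`, and Gelfand's
formula identifies "some power has norm `< 1`" with `ρ(A) < 1`. -/

open scoped ENNReal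

/-- `A` is (right) substochastic: entrywise nonnegative with row sums at most one. -/
def IsSubstochastic {N : ℕ} (A : Matrix (Fin N) (Fin N) ℝ) : Prop :=
  (∀ i j, 0 ≤ A i j) ∧ ∀ i, ∑ j, A i j ≤ 1

/-- There is a walk of length `m` (i.e. with `m` edges) in the directed graph of `A`
(an edge `(i,j)` iff `A i j ≠ 0`) from row `i` to a row whose sum is strictly less
than one (a "non-trouble" state in `Ĵ[A]`). -/
def HasWalkLen {N : ℕ} (A : Matrix (Fin N) (Fin N) ℝ) (i : Fin N) (m : ℕ) : Prop :=
  ∃ p : Fin (m + 1) → Fin N, p 0 = i ∧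
    (∀ k : Fin m, A (p k.castSucc) (p k.succ) ≠ 0) ∧ ∑ j, A (p (Fin.last m)) j < 1

/-- Least length of a walk from `i` to `Ĵ[A]` (with `inf ∅ = ⊤`). -/
noncomputable def minWalkLen {N : ℕ} (A : Matrix (Fin N) (Fin N) ℝ) (i : Fin N) : ℕ∞ :=
  sInf {n : ℕ∞ | ∃ m : ℕ, n = (m : ℕ∞) ∧ HasWalkLen A i m}

/-- The index of contraction `ĉon A` of a substochastic matrix: the supremum over
trouble states `i ∉ Ĵ[A]` of the least length of a walk from `i` to `Ĵ[A]`
(positive part being automatic since `sSup ∅ = 0` in `ℕ∞`). -/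
noncomputable def conHat {N : ℕ} (A : Matrix (Fin N) (Fin N) ℝ) : ℕ∞ :=
  ⨆ i ∈ {i : Fin N | 1 ≤ ∑ j, A i j}, minWalkLen A i

/-- The `ℓ∞` operator norm: maximum absolute row sum. -/
noncomputable def linftyNorm {N : ℕ} (A : Matrix (Fin N) (Fin N) ℝ) : ℝ :=
  ⨆ i, ∑ j, |A i j|

/-- Spectral radius of a real matrix, computed over the complex spectrum. -/
noncomputable def specRad {N : ℕ} (A : Matrix (Fin N) (Fin N) ℝ) : ℝ≥0∞ :=
  spectralRadius ℂ (A.map Complex.ofReal)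

open scoped NNReal

theorem Matrix.sum_mul_apply {ι α : Type*} [Fintype ι] [NonUnitalNonAssocSemiring α]
    (A B : Matrix ι ι α) (i : ι) : ∑ j, (A * B) i j = ∑ k, A i k * ∑ j, B k j := by
  simp only [Matrix.mul_apply, Finset.mul_sum]
  exact Finset.sum_comm

theorem sum_mul_lt_one_iff {ι : Type*} [Fintype ι] {w f : ι → ℝ} (hw : ∀ k, 0 ≤ w k)
    (hw1 : ∑ k, w k ≤ 1) (hf1 : ∀ k, f k ≤ 1) :
    ∑ k, w k * f k < 1 ↔ ∑ k, w k < 1 ∨ ∃ k, w k ≠ 0 ∧ f k < 1 := by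
  constructor
  · contrapose!
    rintro ⟨hsum, hf⟩
    calc 1 ≤ ∑ k, w k := hsum
      _ ≤ ∑ k, w k * f k := Finset.sum_le_sum fun k _ => by
          rcases eq_or_ne (w k) 0 with h | h
          · simp [h]
          · exact le_mul_of_one_le_right (hw k) (hf k h)
  · rintro (h | ⟨k, hwk, hfk⟩)
    · exact (Finset.sum_le_sum fun k _ => mul_le_of_le_one_right (hw k) (hf1 k)).trans_lt h
    · refine lt_of_lt_of_le ?_ hw1
      exact Finset.sum_lt_sum (fun k _ => mul_le_of_le_one_right (hw k) (hf1 k))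
        ⟨k, Finset.mem_univ _, mul_lt_of_lt_one_right ((hw k).lt_of_ne' hwk) hfk⟩

namespace ENat

theorem sInf_setOf_natCast_le_iff {P : ℕ → Prop} {m : ℕ} :
    sInf {n : ℕ∞ | ∃ k : ℕ, n = k ∧ P k} ≤ m ↔ ∃ k ≤ m, P k := by
  set S := {n : ℕ∞ | ∃ k : ℕ, n = k ∧ P k}
  constructor
  · intro h
    obtain ⟨k, hk, hPk⟩ : sInf S ∈ S := csInf_mem <| Set.nonempty_iff_ne_empty.mpr fun hS => by
      simp [hS] at h
    exact ⟨k, Nat.cast_le.mp (hk ▸ h), hPk⟩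
  · rintro ⟨k, hkm, hPk⟩
    exact (sInf_le (show (k : ℕ∞) ∈ S from ⟨k, rfl, hPk⟩)).trans (Nat.cast_le.mpr hkm)

theorem sInf_setOf_natCast_ge (x : ℕ∞) : sInf {n : ℕ∞ | ∃ m : ℕ, n = m ∧ x ≤ m} = x := by
  induction x using ENat.recTopCoe with
  | top => simp
  | coe k =>
    refine le_antisymm (sInf_le ⟨k, rfl, le_rfl⟩) (le_sInf ?_)
    rintro _ ⟨m, rfl, hkm⟩
    exact hkm

theorem lt_top_iff_exists_le_natCast {x : ℕ∞} : x < ⊤ ↔ ∃ m : ℕ, x ≤ m :=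
  ⟨fun h => ⟨x.toNat, (ENat.natCast_toNat h.ne).ge⟩,
    fun ⟨m, hm⟩ => hm.trans_lt (ENat.natCast_lt_top m)⟩

end ENat

namespace IsSubstochastic

variable {N : ℕ} {A B : Matrix (Fin N) (Fin N) ℝ}

theorem one : IsSubstochastic (1 : Matrix (Fin N) (Fin N) ℝ) := by
  refine ⟨fun i j => ?_, fun i => ?_⟩
  · rw [Matrix.one_apply]
    split_ifs <;> norm_num
  · simp [Matrix.one_apply]

theorem mul (hA : IsSubstochastic A) (hB : IsSubstochastic B) : IsSubstochastic (A * B) := by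
  refine ⟨fun i j => Matrix.mul_apply (M := A) ▸
    Finset.sum_nonneg fun k _ => mul_nonneg (hA.1 i k) (hB.1 k j), fun i => ?_⟩
  rw [Matrix.sum_mul_apply]
  calc ∑ k, A i k * ∑ j, B k j ≤ ∑ k, A i k :=
        Finset.sum_le_sum fun k _ => mul_le_of_le_one_right (hA.1 i k) (hB.2 k)
    _ ≤ 1 := hA.2 i

theorem pow (hA : IsSubstochastic A) (m : ℕ) : IsSubstochastic (A ^ m) := by
  induction m with
  | zero => exact pow_zero A ▸ one
  | succ m ih => exact pow_succ' A m ▸ hA.mul ih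

end IsSubstochastic

section Walks

variable {N : ℕ} {A : Matrix (Fin N) (Fin N) ℝ}

theorem hasWalkLen_zero_iff {i : Fin N} : HasWalkLen A i 0 ↔ ∑ j, A i j < 1 :=
  ⟨fun ⟨_, hp0, _, hlast⟩ => hp0 ▸ hlast, fun h => ⟨fun _ => i, rfl, Fin.elim0, h⟩⟩

theorem hasWalkLen_succ_iff {i : Fin N} {m : ℕ} :
    HasWalkLen A i (m + 1) ↔ ∃ k, A i k ≠ 0 ∧ HasWalkLen A k m := by
  constructor
  · rintro ⟨p, rfl, hedge, hlast⟩
    refine ⟨p 1, hedge 0, Fin.tail p, rfl, fun k => ?_, by simpa [Fin.tail] using hlast⟩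
    simpa [Fin.tail, ← Fin.succ_castSucc] using hedge k.succ
  · rintro ⟨k, hik, q, rfl, hedge, hlast⟩
    refine ⟨Fin.cons i q, rfl, Fin.cases hik fun t => ?_, by simpa [← Fin.succ_last] using hlast⟩
    simpa [← Fin.succ_castSucc] using hedge t

end Walks

section Contraction

variable {N : ℕ} {A : Matrix (Fin N) (Fin N) ℝ}

theorem sum_pow_succ_apply_lt_one_iff (hA : IsSubstochastic A) (m : ℕ) (i : Fin N) :
    ∑ j, (A ^ (m + 1)) i j < 1 ↔ ∃ m' ≤ m, HasWalkLen A i m' := by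
  induction m generalizing i with
  | zero => simp [hasWalkLen_zero_iff]
  | succ m ih =>
    rw [pow_succ', Matrix.sum_mul_apply,
      sum_mul_lt_one_iff (hA.1 i) (hA.2 i) fun k => (hA.pow (m + 1)).2 k]
    simp only [ih]
    constructor
    · rintro (h | ⟨k, hk, m', hm', hw⟩)
      · exact ⟨0, m.succ.zero_le, hasWalkLen_zero_iff.mpr h⟩
      · exact ⟨m' + 1, by omega, hasWalkLen_succ_iff.mpr ⟨k, hk, hw⟩⟩
    · rintro ⟨_ | m', hm', hw⟩
      · exact Or.inl (hasWalkLen_zero_iff.mp hw)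
      · obtain ⟨k, hk, hw⟩ := hasWalkLen_succ_iff.mp hw
        exact Or.inr ⟨k, hk, m', by omega, hw⟩

theorem minWalkLen_le_iff {i : Fin N} {m : ℕ} :
    minWalkLen A i ≤ m ↔ ∃ m' ≤ m, HasWalkLen A i m' :=
  ENat.sInf_setOf_natCast_le_iff

theorem conHat_le_iff {m : ℕ} : conHat A ≤ m ↔ ∀ i, ∃ m' ≤ m, HasWalkLen A i m' := by
  simp only [conHat, iSup₂_le_iff, Set.mem_ofPred_eq, minWalkLen_le_iff]
  refine forall_congr' fun i => ⟨fun h => ?_, fun h _ => h⟩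
  by_cases hi : 1 ≤ ∑ j, A i j
  · exact h hi
  · exact ⟨0, m.zero_le, hasWalkLen_zero_iff.mpr (not_le.mp hi)⟩

end Contraction

section LinftyNorm

attribute [local instance] Matrix.linftyOpSeminormedAddCommGroup

theorem Matrix.linfty_opNorm_lt_one_iff {m n α : Type*} [Fintype m] [Fintype n]
    [SeminormedAddCommGroup α] (A : Matrix m n α) : ‖A‖ < 1 ↔ ∀ i, ∑ j, ‖A i j‖ < 1 := by
  rw [Matrix.linfty_opNorm_def, NNReal.coe_lt_one, Finset.sup_lt_iff zero_lt_one]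
  simp only [Finset.mem_univ, true_implies, ← NNReal.coe_lt_one, NNReal.coe_sum, coe_nnnorm]

theorem Matrix.linfty_opNorm_map_ofReal {m n : Type*} [Fintype m] [Fintype n]
    (M : Matrix m n ℝ) : ‖M.map Complex.ofReal‖ = ‖M‖ := by
  simp [Matrix.linfty_opNorm_def, Complex.nnnorm_real]

theorem linftyNorm_eq_linfty_opNorm {N : ℕ} (M : Matrix (Fin N) (Fin N) ℝ) :
    linftyNorm M = ‖M‖ := by
  rw [Matrix.linfty_opNorm_def, Finset.sup_univ_eq_ciSup, NNReal.coe_iSup]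
  simp [linftyNorm, Real.norm_eq_abs]

theorem linftyNorm_pow_succ_lt_one_iff {N : ℕ} {A : Matrix (Fin N) (Fin N) ℝ}
    (hA : IsSubstochastic A) (m : ℕ) : linftyNorm (A ^ (m + 1)) < 1 ↔ conHat A ≤ m := by
  rw [conHat_le_iff, linftyNorm_eq_linfty_opNorm, Matrix.linfty_opNorm_lt_one_iff]
  refine forall_congr' fun i => ?_
  simp only [Real.norm_eq_abs, abs_of_nonneg ((hA.pow _).1 i _)]
  exact sum_pow_succ_apply_lt_one_iff hA m i

end LinftyNorm

section SpectralRadius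

/- Assuming `‖1‖ ≤ 1` instead of `NormOneClass` keeps the zero algebra, such as `0 × 0` matrices
under the `ℓ∞` operator norm, in scope. -/
theorem spectrum.spectralRadius_lt_one_iff {A : Type*} [NormedRing A] [NormedAlgebra ℂ A]
    [CompleteSpace A] (h1 : ‖(1 : A)‖ ≤ 1) (a : A) :
    spectralRadius ℂ a < 1 ↔ ∃ n : ℕ, ‖a ^ (n + 1)‖ < 1 := by
  constructor
  · intro h
    obtain ⟨n, hn⟩ := ((spectrum.pow_nnnorm_pow_one_div_tendsto_nhds_spectralRadius a)
      |>.eventually_lt_const h).exists_forall_of_atTop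
    have hr : (0 : ℝ) < 1 / (n + 1 : ℕ) := by positivity
    have hlt : (‖a ^ (n + 1)‖₊ : ℝ≥0∞) < 1 :=
      not_le.mp fun hle => (ENNReal.one_le_rpow hle hr).not_gt (hn (n + 1) n.le_succ)
    exact ⟨n, by exact_mod_cast hlt⟩
  · rintro ⟨n, hn⟩
    have hr : (0 : ℝ) < 1 / (n + 1) := by positivity
    have h1' : (‖(1 : A)‖₊ : ℝ≥0∞) ≤ 1 := by exact_mod_cast h1
    have hn' : (‖a ^ (n + 1)‖₊ : ℝ≥0∞) < 1 := by exact_mod_cast hn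
    exact (spectrum.spectralRadius_le_pow_nnnorm_pow_one_div ℂ a n).trans_lt <|
      mul_lt_one_of_lt_of_le (ENNReal.rpow_lt_one hn' hr) (ENNReal.rpow_le_one h1' hr.le)

attribute [local instance] Matrix.linftyOpNormedRing Matrix.linftyOpNormedAlgebra

theorem Matrix.linfty_opNorm_one_le {n α : Type*} [Fintype n] [DecidableEq n] [NormedRing α]
    [NormOneClass α] : ‖(1 : Matrix n n α)‖ ≤ 1 := by
  rw [← Matrix.diagonal_one, Matrix.linfty_opNorm_diagonal]
  exact pi_norm_le_iff_of_nonneg zero_le_one |>.mpr fun _ => norm_one.le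

theorem specRad_lt_one_iff {N : ℕ} (A : Matrix (Fin N) (Fin N) ℝ) :
    specRad A < 1 ↔ ∃ m : ℕ, linftyNorm (A ^ (m + 1)) < 1 := by
  rw [specRad, spectrum.spectralRadius_lt_one_iff Matrix.linfty_opNorm_one_le]
  refine exists_congr fun m => ?_
  rw [linftyNorm_eq_linfty_opNorm, ← Matrix.linfty_opNorm_map_ofReal]
  exact iff_of_eq (congrArg (‖·‖ < 1) (Matrix.map_pow A Complex.ofRealHom (m + 1)).symm)

end SpectralRadius

/-- For a substochastic matrix `A`, the index of contraction equals the infimum of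
all `n` with `‖A^(n+1)‖_∞ < 1`; in particular it is finite iff `ρ(A) < 1`. -/
theorem conHat_eq_inf_norm_lt_one {N : ℕ} (A : Matrix (Fin N) (Fin N) ℝ)
    (hA : IsSubstochastic A) :
    conHat A = sInf {n : ℕ∞ | ∃ m : ℕ, n = (m : ℕ∞) ∧ linftyNorm (A ^ (m + 1)) < 1} ∧
    (conHat A < ⊤ ↔ specRad A < 1) := by
  simp only [specRad_lt_one_iff, linftyNorm_pow_succ_lt_one_iff hA]
  exact ⟨(ENat.sInf_setOf_natCast_ge _).symm, ENat.lt_top_iff_exists_le_natCast⟩
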